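/- With N_opt and D_opt as the minimizers of L(N,D) = A/N^α + B/D^β + E subject to 6ND = C, the compute-optimal loss satisfies L_opt(C) = E + (A·G^{-α} + B·G^{β})·(C/6)^{-αβ/(α+β)}, where G = (αA/(βB))^{1/(α+β)}. -/

import Mathlib

open Real

lemma div_rpow_mul_rpow {t g : ℝ} (ht : 0 ≤ t) (hg : 0 < g) (a p q : ℝ) :
    a / (t ^ p * g) ^ q = a * g ^ (-q) * t ^ (-(p * q)) := by
  rw [mul_rpow (rpow_nonneg ht p) hg.le, ← rpow_mul ht, rpow_neg hg.le, rpow_neg ht]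
  field_simp

lemma inv_rpow_neg {g : ℝ} (hg : 0 ≤ g) (q : ℝ) : g⁻¹ ^ (-q) = g ^ q := by
  rw [inv_rpow hg, rpow_neg hg, inv_inv]

theorem compute_optimal_loss_general
    (A B α β E C : ℝ) (hA : 0 < A) (hB : 0 < B) (hα : 0 < α) (hβ : 0 < β)
    (hC : 0 < C)
    (G : ℝ) (hG : G = (α * A / (β * B)) ^ (1 / (α + β)))
    (Nopt Dopt : ℝ)
    (hN : Nopt = (C / 6) ^ (β / (α + β)) * G)
    (hD : Dopt = (C / 6) ^ (α / (α + β)) * G⁻¹) :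
    A / Nopt ^ α + B / Dopt ^ β + E =
      E + (A * G ^ (-α) + B * G ^ β) * (C / 6) ^ (-(α * β / (α + β))) := by
  have hC6 : 0 ≤ C / 6 := by positivity
  have hG0 : 0 < G := hG ▸ rpow_pos_of_pos (by positivity) _
  rw [hN, hD, div_rpow_mul_rpow hC6 hG0, div_rpow_mul_rpow hC6 (inv_pos.2 hG0),
    inv_rpow_neg hG0.le]
  ring_nf

/-- The compute-optimal loss satisfies
`L_opt(C) = E + (A·G^{-α} + B·G^{β})·(C/6)^{-αβ/(α+β)}` with
`G = (αA/(βB))^{1/(α+β)}`. -/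
theorem compute_optimal_loss
    (A B α β E C : ℝ) (hA : 0 < A) (hB : 0 < B) (hα : 0 < α) (hβ : 0 < β)
    (hE : 0 ≤ E) (hC : 0 < C)
    (G : ℝ) (hG : G = (α * A / (β * B)) ^ (1 / (α + β)))
    (Nopt Dopt : ℝ)
    (hN : Nopt = (C / 6) ^ (β / (α + β)) * G)
    (hD : Dopt = (C / 6) ^ (α / (α + β)) * G⁻¹) :
    A / Nopt ^ α + B / Dopt ^ β + E =
      E + (A * G ^ (-α) + B * G ^ β) * (C / 6) ^ (-(α * β / (α + β))) :=
  compute_optimal_loss_general A B α β E C hA hB hα hβ hC G hG Nopt Dopt hN hD
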